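/- Let (T,F) be a pair over a braided monoidal category V, let M := Ψ(T,F) be the induced unital module monoidal category (action v▷m := F(v)⊗m), and let (T,F') be the pair associated to M (so F'(v) = F(v)⊗1_T with half-braiding, φ₂^{F'} and φ₀^{F'} as in the construction of a pair from a unital module monoidal category). Then the identity functor Id_T together with φ₂ = id, φ₀ = id and action coherence γ_v := r_{F(v)} : F'(v) = F(v)⊗1_T → F(v) is a morphism of pairs (T,F) → (T,F') and it is an equivalence of pairs whose underlying functor is the identity (an Id-equivalence). -/

import Mathlib

/-!
`Ψ(T, F)` acts by `F v ⊗ -`, so the pair associated to it has `F' v = F v ⊗ 𝟙`, and conjugating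
its structure maps by the right unitors `ρ_ (F v)` gives back those of `F`. For `F' f`, `φ₂'`,
`φ₀'` and the half-braidings this is monoidal coherence, once one knows that a half-braiding
evaluated at `𝟙` is always `ρ ≫ λ⁻¹`. Finally, a morphism of pairs whose functor is the identity
with trivial monoidal structure is always an equivalence of pairs: the inverse action coherence
`γ⁻¹` gives a morphism of pairs back, and both composites are the identity.
-/

open CategoryTheory MonoidalCategory Category

universe v₁ v₂ v₃ v₄ u₁ u₂ u₃ u₄

namespace ModMonPaper

/-! ### Strong monoidal functors as data plus property -/

section MonFunctor

variable (V : Type u₁) [Category.{v₁} V] [MonoidalCategory V]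
variable (W : Type u₂) [Category.{v₂} W] [MonoidalCategory W]
variable (X : Type u₃) [Category.{v₃} X] [MonoidalCategory X]

/-- The data of a (strong) monoidal functor: a functor together with the
coherence isomorphisms `φ₂` and `φ₀`. -/
structure MonFunctorData where
  F : V ⥤ W
  φ₂ : ∀ x y : V, F.obj x ⊗ F.obj y ≅ F.obj (x ⊗ y)
  φ₀ : 𝟙_ W ≅ F.obj (𝟙_ V)

variable {V W X}

/-- The axioms of a (strong) monoidal functor. -/
structure MonFunctorData.IsMonFunctor (D : MonFunctorData V W) : Prop where
  φ₂_natural : ∀ {x y x' y' : V} (f : x ⟶ x') (g : y ⟶ y'),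
    (D.F.map f ⊗ₘ D.F.map g) ≫ (D.φ₂ x' y').hom = (D.φ₂ x y).hom ≫ D.F.map (f ⊗ₘ g)
  hexagon : ∀ x y z : V,
    ((D.φ₂ x y).hom ⊗ₘ 𝟙 (D.F.obj z)) ≫ (D.φ₂ (x ⊗ y) z).hom ≫ D.F.map (α_ x y z).hom =
      (α_ (D.F.obj x) (D.F.obj y) (D.F.obj z)).hom ≫ (𝟙 (D.F.obj x) ⊗ₘ (D.φ₂ y z).hom) ≫
        (D.φ₂ x (y ⊗ z)).hom
  φ₀_left : ∀ x : V,
    (D.φ₀.hom ⊗ₘ 𝟙 (D.F.obj x)) ≫ (D.φ₂ (𝟙_ V) x).hom ≫ D.F.map (λ_ x).hom =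
      (λ_ (D.F.obj x)).hom
  φ₀_right : ∀ x : V,
    (𝟙 (D.F.obj x) ⊗ₘ D.φ₀.hom) ≫ (D.φ₂ x (𝟙_ V)).hom ≫ D.F.map (ρ_ x).hom =
      (ρ_ (D.F.obj x)).hom

variable (V) in
/-- The identity monoidal functor data. -/
def MonFunctorData.id : MonFunctorData V V :=
  ⟨𝟭 V, fun x y => Iso.refl (x ⊗ y), Iso.refl (𝟙_ V)⟩

/-- Composition of monoidal functor data. -/
def MonFunctorData.comp (D : MonFunctorData V W) (E : MonFunctorData W X) :
    MonFunctorData V X :=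
  ⟨D.F ⋙ E.F, fun x y => E.φ₂ (D.F.obj x) (D.F.obj y) ≪≫ E.F.mapIso (D.φ₂ x y),
    E.φ₀ ≪≫ E.F.mapIso D.φ₀⟩

/-- A natural transformation between (strong) monoidal functors is monoidal if it is
compatible with `φ₂` and `φ₀`. -/
def IsMonNT (D E : MonFunctorData V W) (τ : D.F ⟶ E.F) : Prop :=
  (∀ x y : V, (D.φ₂ x y).hom ≫ τ.app (x ⊗ y) = (τ.app x ⊗ₘ τ.app y) ≫ (E.φ₂ x y).hom) ∧
    D.φ₀.hom ≫ τ.app (𝟙_ V) = E.φ₀.hom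

/-- A braided monoidal functor: a monoidal functor compatible with the braidings. -/
def MonFunctorData.IsBraidedFunctor [BraidedCategory V] [BraidedCategory W]
    (D : MonFunctorData V W) : Prop :=
  D.IsMonFunctor ∧
    ∀ x y : V, (D.φ₂ x y).hom ≫ D.F.map (β_ x y).hom =
      (β_ (D.F.obj x) (D.F.obj y)).hom ≫ (D.φ₂ y x).hom

end MonFunctor

/-! ### Module categories -/

section ModuleCat

variable (V : Type u₁) [Category.{v₁} V] [MonoidalCategory V]
variable (M : Type u₂) [Category.{v₂} M]
variable (M' : Type u₃) [Category.{v₃} M']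

/-- The data of a left `V`-module category structure on `M`. -/
structure ModuleData where
  act : V → M → M
  actMap : ∀ {v w : V} {x y : M}, (v ⟶ w) → (x ⟶ y) → (act v x ⟶ act w y)
  massoc : ∀ (v w : V) (x : M), act (v ⊗ w) x ≅ act v (act w x)
  munit : ∀ x : M, act (𝟙_ V) x ≅ x

variable {V M M'}

/-- The axioms of a left module category. -/
structure ModuleData.IsModule (P : ModuleData V M) : Prop where
  actMap_id : ∀ (v : V) (x : M), P.actMap (𝟙 v) (𝟙 x) = 𝟙 (P.act v x)
  actMap_comp : ∀ {v w u : V} {x y z : M} (f : v ⟶ w) (g : w ⟶ u) (h : x ⟶ y) (k : y ⟶ z),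
    P.actMap (f ≫ g) (h ≫ k) = P.actMap f h ≫ P.actMap g k
  massoc_natural : ∀ {v v' w w' : V} {x x' : M} (f : v ⟶ v') (g : w ⟶ w') (h : x ⟶ x'),
    P.actMap (f ⊗ₘ g) h ≫ (P.massoc v' w' x').hom =
      (P.massoc v w x).hom ≫ P.actMap f (P.actMap g h)
  munit_natural : ∀ {x x' : M} (h : x ⟶ x'),
    P.actMap (𝟙 (𝟙_ V)) h ≫ (P.munit x').hom = (P.munit x).hom ≫ h
  pentagon : ∀ (u v w : V) (x : M),
    P.actMap (α_ u v w).hom (𝟙 x) ≫ (P.massoc u (v ⊗ w) x).hom ≫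
        P.actMap (𝟙 u) (P.massoc v w x).hom =
      (P.massoc (u ⊗ v) w x).hom ≫ (P.massoc u v (P.act w x)).hom
  triangle : ∀ (v : V) (x : M),
    (P.massoc v (𝟙_ V) x).hom ≫ P.actMap (𝟙 v) (P.munit x).hom = P.actMap (ρ_ v).hom (𝟙 x)

/-- Acting with a fixed object of `V` on an isomorphism of `M`. -/
def ModuleData.actIso (P : ModuleData V M)
    (hid : ∀ (v : V) (x : M), P.actMap (𝟙 v) (𝟙 x) = 𝟙 (P.act v x))
    (hcomp : ∀ {v w u : V} {x y z : M} (f : v ⟶ w) (g : w ⟶ u) (h : x ⟶ y) (k : y ⟶ z),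
      P.actMap (f ≫ g) (h ≫ k) = P.actMap f h ≫ P.actMap g k)
    (v : V) {x y : M} (e : x ≅ y) : P.act v x ≅ P.act v y where
  hom := P.actMap (𝟙 v) e.hom
  inv := P.actMap (𝟙 v) e.inv
  hom_inv_id := by rw [← hcomp]; simp [hid]
  inv_hom_id := by rw [← hcomp]; simp [hid]

/-- The data of a module functor. -/
structure ModuleFunctorData (P : ModuleData V M) (P' : ModuleData V M') where
  F : M ⥤ M'
  s : ∀ (v : V) (x : M), P'.act v (F.obj x) ≅ F.obj (P.act v x)

/-- The axioms of a module functor. -/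
structure ModuleFunctorData.IsModuleFunctor {P : ModuleData V M} {P' : ModuleData V M'}
    (D : ModuleFunctorData P P') : Prop where
  s_natural : ∀ {v w : V} {x y : M} (f : v ⟶ w) (g : x ⟶ y),
    P'.actMap f (D.F.map g) ≫ (D.s w y).hom = (D.s v x).hom ≫ D.F.map (P.actMap f g)
  pentagon : ∀ (v w : V) (x : M),
    (D.s (v ⊗ w) x).hom ≫ D.F.map (P.massoc v w x).hom =
      (P'.massoc v w (D.F.obj x)).hom ≫ P'.actMap (𝟙 v) (D.s w x).hom ≫
        (D.s v (P.act w x)).hom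
  triangle : ∀ x : M,
    (D.s (𝟙_ V) x).hom ≫ D.F.map (P.munit x).hom = (P'.munit (D.F.obj x)).hom

/-- The identity module functor data. -/
def ModuleFunctorData.id (P : ModuleData V M) : ModuleFunctorData P P :=
  ⟨𝟭 M, fun v x => Iso.refl (P.act v x)⟩

/-- Composition of module functor data. -/
def ModuleFunctorData.comp {M'' : Type u₄} [Category.{v₄} M''] {P : ModuleData V M}
    {P' : ModuleData V M'} {P'' : ModuleData V M''}
    (D : ModuleFunctorData P P') (E : ModuleFunctorData P' P'') :
    ModuleFunctorData P P'' :=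
  ⟨D.F ⋙ E.F, fun v x => E.s v (D.F.obj x) ≪≫ E.F.mapIso (D.s v x)⟩

/-- Module natural transformations. -/
def IsModuleNT {P : ModuleData V M} {P' : ModuleData V M'}
    (D E : ModuleFunctorData P P') (τ : D.F ⟶ E.F) : Prop :=
  ∀ (v : V) (x : M),
    (D.s v x).hom ≫ τ.app (P.act v x) = P'.actMap (𝟙 v) (τ.app x) ≫ (E.s v x).hom

end ModuleCat

end ModMonPaper
/-! ### Unital module monoidal categories -/

namespace ModMonPaper

section UMM

variable (V : Type u₁) [Category.{v₁} V] [MonoidalCategory V]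
variable (M : Type u₂) [Category.{v₂} M] [MonoidalCategory M]
variable (M' : Type u₃) [Category.{v₃} M'] [MonoidalCategory M']

/-- The data of a unital module monoidal category over `V` on the (unital) monoidal
category `M`: a module category structure together with the coherences `α₁` and `α₂`. -/
structure ModMonData extends ModuleData V M where
  α₁ : ∀ (v : V) (x y : M), act v x ⊗ y ≅ act v (x ⊗ y)
  α₂ : ∀ (v : V) (x y : M), x ⊗ act v y ≅ act v (x ⊗ y)

variable {V M M'}

/-- The axioms of a unital module monoidal category over a braided category `V`. -/
structure ModMonData.IsModMon [BraidedCategory V] (P : ModMonData V M) : Prop where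
  toIsModule : P.toModuleData.IsModule
  α₁_natural : ∀ {v v' : V} {x x' y y' : M} (f : v ⟶ v') (g : x ⟶ x') (h : y ⟶ y'),
    (P.actMap f g ⊗ₘ h) ≫ (P.α₁ v' x' y').hom = (P.α₁ v x y).hom ≫ P.actMap f (g ⊗ₘ h)
  α₂_natural : ∀ {v v' : V} {x x' y y' : M} (f : v ⟶ v') (g : x ⟶ x') (h : y ⟶ y'),
    (g ⊗ₘ P.actMap f h) ≫ (P.α₂ v' x' y').hom = (P.α₂ v x y).hom ≫ P.actMap f (g ⊗ₘ h)
  α₁_assoc : ∀ (v : V) (l m n : M),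
    ((P.α₁ v l m).hom ⊗ₘ 𝟙 n) ≫ (P.α₁ v (l ⊗ m) n).hom ≫ P.actMap (𝟙 v) (α_ l m n).hom =
      (α_ (P.act v l) m n).hom ≫ (P.α₁ v l (m ⊗ n)).hom
  α₁_massoc : ∀ (v w : V) (m n : M),
    ((P.massoc v w m).hom ⊗ₘ 𝟙 n) ≫ (P.α₁ v (P.act w m) n).hom ≫
        P.actMap (𝟙 v) (P.α₁ w m n).hom =
      (P.α₁ (v ⊗ w) m n).hom ≫ (P.massoc v w (m ⊗ n)).hom
  α₂_assoc : ∀ (v : V) (l m n : M),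
    (α_ l m (P.act v n)).hom ≫ (𝟙 l ⊗ₘ (P.α₂ v m n).hom) ≫ (P.α₂ v l (m ⊗ n)).hom =
      (P.α₂ v (l ⊗ m) n).hom ≫ P.actMap (𝟙 v) (α_ l m n).hom
  α₂_massoc : ∀ (v w : V) (m n : M),
    (𝟙 m ⊗ₘ (P.massoc v w n).hom) ≫ (P.α₂ v m (P.act w n)).hom ≫
        P.actMap (𝟙 v) (P.α₂ w m n).hom =
      (P.α₂ (v ⊗ w) m n).hom ≫ (P.massoc v w (m ⊗ n)).hom
  α₁_α₂ : ∀ (v : V) (l m n : M),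
    ((P.α₂ v l m).hom ⊗ₘ 𝟙 n) ≫ (P.α₁ v (l ⊗ m) n).hom ≫ P.actMap (𝟙 v) (α_ l m n).hom =
      (α_ l (P.act v m) n).hom ≫ (𝟙 l ⊗ₘ (P.α₁ v m n).hom) ≫ (P.α₂ v l (m ⊗ n)).hom
  braiding_act : ∀ (v w : V) (m n : M),
    (P.α₂ v (P.act w m) n).hom ≫ P.actMap (𝟙 v) (P.α₁ w m n).hom ≫
        (P.massoc v w (m ⊗ n)).inv ≫ P.actMap (β_ v w).hom (𝟙 (m ⊗ n)) =
      (P.α₁ w m (P.act v n)).hom ≫ P.actMap (𝟙 w) (P.α₂ v m n).hom ≫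
        (P.massoc w v (m ⊗ n)).inv

/-- The data of a unital module monoidal functor. -/
structure UMMFunctorData (P : ModMonData V M) (P' : ModMonData V M') where
  F : M ⥤ M'
  φ₂ : ∀ x y : M, F.obj x ⊗ F.obj y ≅ F.obj (x ⊗ y)
  φ₀ : 𝟙_ M' ≅ F.obj (𝟙_ M)
  s : ∀ (v : V) (x : M), P'.act v (F.obj x) ≅ F.obj (P.act v x)

/-- The axioms of a unital module monoidal functor. -/
structure UMMFunctorData.IsUMMFunctor {P : ModMonData V M} {P' : ModMonData V M'}
    (D : UMMFunctorData P P') : Prop where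
  φ₂_natural : ∀ {x x' y y' : M} (f : x ⟶ x') (g : y ⟶ y'),
    (D.F.map f ⊗ₘ D.F.map g) ≫ (D.φ₂ x' y').hom = (D.φ₂ x y).hom ≫ D.F.map (f ⊗ₘ g)
  hexagon : ∀ x y z : M,
    ((D.φ₂ x y).hom ⊗ₘ 𝟙 (D.F.obj z)) ≫ (D.φ₂ (x ⊗ y) z).hom ≫ D.F.map (α_ x y z).hom =
      (α_ (D.F.obj x) (D.F.obj y) (D.F.obj z)).hom ≫ (𝟙 (D.F.obj x) ⊗ₘ (D.φ₂ y z).hom) ≫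
        (D.φ₂ x (y ⊗ z)).hom
  φ₀_left : ∀ x : M,
    (D.φ₀.hom ⊗ₘ 𝟙 (D.F.obj x)) ≫ (D.φ₂ (𝟙_ M) x).hom ≫ D.F.map (λ_ x).hom =
      (λ_ (D.F.obj x)).hom
  φ₀_right : ∀ x : M,
    (𝟙 (D.F.obj x) ⊗ₘ D.φ₀.hom) ≫ (D.φ₂ x (𝟙_ M)).hom ≫ D.F.map (ρ_ x).hom =
      (ρ_ (D.F.obj x)).hom
  s_natural : ∀ {v w : V} {x y : M} (f : v ⟶ w) (g : x ⟶ y),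
    P'.actMap f (D.F.map g) ≫ (D.s w y).hom = (D.s v x).hom ≫ D.F.map (P.actMap f g)
  s_pentagon : ∀ (v w : V) (x : M),
    (D.s (v ⊗ w) x).hom ≫ D.F.map (P.massoc v w x).hom =
      (P'.massoc v w (D.F.obj x)).hom ≫ P'.actMap (𝟙 v) (D.s w x).hom ≫
        (D.s v (P.act w x)).hom
  s_triangle : ∀ x : M,
    (D.s (𝟙_ V) x).hom ≫ D.F.map (P.munit x).hom = (P'.munit (D.F.obj x)).hom
  compα₁ : ∀ (v : V) (x y : M),
    (P'.α₁ v (D.F.obj x) (D.F.obj y)).hom ≫ P'.actMap (𝟙 v) (D.φ₂ x y).hom ≫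
        (D.s v (x ⊗ y)).hom =
      ((D.s v x).hom ⊗ₘ 𝟙 (D.F.obj y)) ≫ (D.φ₂ (P.act v x) y).hom ≫
        D.F.map (P.α₁ v x y).hom
  compα₂ : ∀ (v : V) (x y : M),
    (P'.α₂ v (D.F.obj x) (D.F.obj y)).hom ≫ P'.actMap (𝟙 v) (D.φ₂ x y).hom ≫
        (D.s v (x ⊗ y)).hom =
      (𝟙 (D.F.obj x) ⊗ₘ (D.s v y).hom) ≫ (D.φ₂ x (P.act v y)).hom ≫
        D.F.map (P.α₂ v x y).hom

/-- The identity unital module monoidal functor data. -/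
def UMMFunctorData.id (P : ModMonData V M) : UMMFunctorData P P :=
  ⟨𝟭 M, fun x y => Iso.refl (x ⊗ y), Iso.refl (𝟙_ M), fun v x => Iso.refl (P.act v x)⟩

/-- Composition of unital module monoidal functor data. -/
def UMMFunctorData.comp {M'' : Type u₄} [Category.{v₄} M''] [MonoidalCategory M'']
    {P : ModMonData V M} {P' : ModMonData V M'} {P'' : ModMonData V M''}
    (D : UMMFunctorData P P') (E : UMMFunctorData P' P'') : UMMFunctorData P P'' :=
  ⟨D.F ⋙ E.F,
    fun x y => E.φ₂ (D.F.obj x) (D.F.obj y) ≪≫ E.F.mapIso (D.φ₂ x y),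
    E.φ₀ ≪≫ E.F.mapIso D.φ₀,
    fun v x => E.s v (D.F.obj x) ≪≫ E.F.mapIso (D.s v x)⟩

/-- Unital module monoidal natural transformations. -/
def IsUMMNT {P : ModMonData V M} {P' : ModMonData V M'}
    (D E : UMMFunctorData P P') (τ : D.F ⟶ E.F) : Prop :=
  (∀ x y : M, (D.φ₂ x y).hom ≫ τ.app (x ⊗ y) = (τ.app x ⊗ₘ τ.app y) ≫ (E.φ₂ x y).hom) ∧
    (D.φ₀.hom ≫ τ.app (𝟙_ M) = E.φ₀.hom) ∧
    ∀ (v : V) (x : M), (D.s v x).hom ≫ τ.app (P.act v x) =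
      P'.actMap (𝟙 v) (τ.app x) ≫ (E.s v x).hom

/-- `D` is an equivalence of unital module monoidal categories. -/
def UMMFunctorData.IsEquiv {P : ModMonData V M} {P' : ModMonData V M'}
    (D : UMMFunctorData P P') : Prop :=
  ∃ E : UMMFunctorData P' P, E.IsUMMFunctor ∧
    ∃ (η : (UMMFunctorData.id P).F ≅ (UMMFunctorData.comp D E).F)
      (ε : (UMMFunctorData.comp E D).F ≅ (UMMFunctorData.id P').F),
      IsUMMNT (UMMFunctorData.id P) (UMMFunctorData.comp D E) η.hom ∧
        IsUMMNT (UMMFunctorData.comp E D) (UMMFunctorData.id P') ε.hom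

end UMM

end ModMonPaper
/-! ### Pairs: braided central monoidal functors -/

namespace ModMonPaper

section Central

variable (V : Type u₁) [Category.{v₁} V] [MonoidalCategory V] [BraidedCategory V]
variable (T : Type u₂) [Category.{v₂} T] [MonoidalCategory T]
variable (T' : Type u₃) [Category.{v₃} T'] [MonoidalCategory T']

/-- The data of a braided central monoidal functor `V ⟶ T`, i.e. the data of a pair
`(T, F)`: the underlying functor `F`, the half-braidings of the chosen lift
`F^Z : V ⟶ Z(T)` to the Drinfeld center, and the monoidal structure `φ₂`, `φ₀`. -/
structure CentralData where
  obj : V → T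
  map : ∀ {v w : V}, (v ⟶ w) → (obj v ⟶ obj w)
  halfBraiding : ∀ (v : V) (t : T), obj v ⊗ t ≅ t ⊗ obj v
  φ₂ : ∀ v w : V, obj v ⊗ obj w ≅ obj (v ⊗ w)
  φ₀ : 𝟙_ T ≅ obj (𝟙_ V)

variable {V T T'}

/-- The axioms making `C : CentralData V T` into a braided central monoidal functor,
i.e. a pair `(T, F)`: `F` is a functor; each `(F v, halfBraiding v)` is an object of the
Drinfeld center `Z(T)`; `F f`, `φ₂` and `φ₀` are morphisms in `Z(T)`; the lift is a
braided (strong) monoidal functor. -/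
structure CentralData.IsCentral (C : CentralData V T) : Prop where
  map_id : ∀ v : V, C.map (𝟙 v) = 𝟙 (C.obj v)
  map_comp : ∀ {u v w : V} (f : u ⟶ v) (g : v ⟶ w), C.map (f ≫ g) = C.map f ≫ C.map g
  halfBraiding_natural : ∀ (v : V) {t t' : T} (f : t ⟶ t'),
    (𝟙 (C.obj v) ⊗ₘ f) ≫ (C.halfBraiding v t').hom =
      (C.halfBraiding v t).hom ≫ (f ⊗ₘ 𝟙 (C.obj v))
  halfBraiding_hex : ∀ (v : V) (x y : T),
    (α_ (C.obj v) x y).hom ≫ (C.halfBraiding v (x ⊗ y)).hom ≫ (α_ x y (C.obj v)).hom =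
      ((C.halfBraiding v x).hom ⊗ₘ 𝟙 y) ≫ (α_ x (C.obj v) y).hom ≫
        (𝟙 x ⊗ₘ (C.halfBraiding v y).hom)
  map_central : ∀ {v w : V} (f : v ⟶ w) (t : T),
    (C.map f ⊗ₘ 𝟙 t) ≫ (C.halfBraiding w t).hom =
      (C.halfBraiding v t).hom ≫ (𝟙 t ⊗ₘ C.map f)
  φ₂_natural : ∀ {v v' w w' : V} (f : v ⟶ v') (g : w ⟶ w'),
    (C.map f ⊗ₘ C.map g) ≫ (C.φ₂ v' w').hom = (C.φ₂ v w).hom ≫ C.map (f ⊗ₘ g)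
  φ₂_central : ∀ (v w : V) (t : T),
    ((C.φ₂ v w).hom ⊗ₘ 𝟙 t) ≫ (C.halfBraiding (v ⊗ w) t).hom =
      ((α_ (C.obj v) (C.obj w) t).hom ≫ (𝟙 (C.obj v) ⊗ₘ (C.halfBraiding w t).hom) ≫
        (α_ (C.obj v) t (C.obj w)).inv ≫ ((C.halfBraiding v t).hom ⊗ₘ 𝟙 (C.obj w)) ≫
          (α_ t (C.obj v) (C.obj w)).hom) ≫ (𝟙 t ⊗ₘ (C.φ₂ v w).hom)
  φ₀_central : ∀ t : T,
    (C.φ₀.hom ⊗ₘ 𝟙 t) ≫ (C.halfBraiding (𝟙_ V) t).hom =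
      ((λ_ t).hom ≫ (ρ_ t).inv) ≫ (𝟙 t ⊗ₘ C.φ₀.hom)
  hexagon : ∀ u v w : V,
    ((C.φ₂ u v).hom ⊗ₘ 𝟙 (C.obj w)) ≫ (C.φ₂ (u ⊗ v) w).hom ≫ C.map (α_ u v w).hom =
      (α_ (C.obj u) (C.obj v) (C.obj w)).hom ≫ (𝟙 (C.obj u) ⊗ₘ (C.φ₂ v w).hom) ≫
        (C.φ₂ u (v ⊗ w)).hom
  φ₀_left : ∀ v : V,
    (C.φ₀.hom ⊗ₘ 𝟙 (C.obj v)) ≫ (C.φ₂ (𝟙_ V) v).hom ≫ C.map (λ_ v).hom =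
      (λ_ (C.obj v)).hom
  φ₀_right : ∀ v : V,
    (𝟙 (C.obj v) ⊗ₘ C.φ₀.hom) ≫ (C.φ₂ v (𝟙_ V)).hom ≫ C.map (ρ_ v).hom =
      (ρ_ (C.obj v)).hom
  braided : ∀ v w : V,
    (C.φ₂ v w).hom ≫ C.map (β_ v w).hom =
      (C.halfBraiding v (C.obj w)).hom ≫ (C.φ₂ w v).hom

/-- The data of a morphism of pairs `(T, C) ⟶ (T', C')`. -/
structure PairHomData (C : CentralData V T) (C' : CentralData V T') where
  G : T ⥤ T'
  φ₂ : ∀ x y : T, G.obj x ⊗ G.obj y ≅ G.obj (x ⊗ y)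
  φ₀ : 𝟙_ T' ≅ G.obj (𝟙_ T)
  γ : ∀ v : V, C'.obj v ≅ G.obj (C.obj v)

/-- The axioms of a morphism of pairs: `(G, φ₂, φ₀)` is a (strong) monoidal functor and
`γ : F' ⟹ G ∘ F` is a monoidal natural isomorphism compatible with the half-braidings. -/
structure PairHomData.IsPairHom {C : CentralData V T} {C' : CentralData V T'}
    (D : PairHomData C C') : Prop where
  φ₂_natural : ∀ {x x' y y' : T} (f : x ⟶ x') (g : y ⟶ y'),
    (D.G.map f ⊗ₘ D.G.map g) ≫ (D.φ₂ x' y').hom = (D.φ₂ x y).hom ≫ D.G.map (f ⊗ₘ g)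
  hexagon : ∀ x y z : T,
    ((D.φ₂ x y).hom ⊗ₘ 𝟙 (D.G.obj z)) ≫ (D.φ₂ (x ⊗ y) z).hom ≫ D.G.map (α_ x y z).hom =
      (α_ (D.G.obj x) (D.G.obj y) (D.G.obj z)).hom ≫ (𝟙 (D.G.obj x) ⊗ₘ (D.φ₂ y z).hom) ≫
        (D.φ₂ x (y ⊗ z)).hom
  φ₀_left : ∀ x : T,
    (D.φ₀.hom ⊗ₘ 𝟙 (D.G.obj x)) ≫ (D.φ₂ (𝟙_ T) x).hom ≫ D.G.map (λ_ x).hom =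
      (λ_ (D.G.obj x)).hom
  φ₀_right : ∀ x : T,
    (𝟙 (D.G.obj x) ⊗ₘ D.φ₀.hom) ≫ (D.φ₂ x (𝟙_ T)).hom ≫ D.G.map (ρ_ x).hom =
      (ρ_ (D.G.obj x)).hom
  γ_natural : ∀ {v w : V} (f : v ⟶ w),
    C'.map f ≫ (D.γ w).hom = (D.γ v).hom ≫ D.G.map (C.map f)
  γ_tensor : ∀ v w : V,
    (C'.φ₂ v w).hom ≫ (D.γ (v ⊗ w)).hom =
      ((D.γ v).hom ⊗ₘ (D.γ w).hom) ≫ (D.φ₂ (C.obj v) (C.obj w)).hom ≫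
        D.G.map (C.φ₂ v w).hom
  γ_unit : C'.φ₀.hom ≫ (D.γ (𝟙_ V)).hom = D.φ₀.hom ≫ D.G.map C.φ₀.hom
  γ_braiding : ∀ (v : V) (t : T),
    ((D.γ v).hom ⊗ₘ 𝟙 (D.G.obj t)) ≫ (D.φ₂ (C.obj v) t).hom ≫
        D.G.map (C.halfBraiding v t).hom =
      (C'.halfBraiding v (D.G.obj t)).hom ≫ (𝟙 (D.G.obj t) ⊗ₘ (D.γ v).hom) ≫
        (D.φ₂ t (C.obj v)).hom

/-- The identity morphism of pairs. -/
def PairHomData.id (C : CentralData V T) : PairHomData C C :=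
  ⟨𝟭 T, fun x y => Iso.refl (x ⊗ y), Iso.refl (𝟙_ T), fun v => Iso.refl (C.obj v)⟩

/-- Composition of morphisms of pairs. -/
def PairHomData.comp {T'' : Type u₄} [Category.{v₄} T''] [MonoidalCategory T'']
    {C : CentralData V T} {C' : CentralData V T'} {C'' : CentralData V T''}
    (D : PairHomData C C') (E : PairHomData C' C'') : PairHomData C C'' :=
  ⟨D.G ⋙ E.G,
    fun x y => E.φ₂ (D.G.obj x) (D.G.obj y) ≪≫ E.G.mapIso (D.φ₂ x y),
    E.φ₀ ≪≫ E.G.mapIso D.φ₀,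
    fun v => E.γ v ≪≫ E.G.mapIso (D.γ v)⟩

/-- 2-morphisms of pairs. -/
def IsPair2Mor {C : CentralData V T} {C' : CentralData V T'}
    (D E : PairHomData C C') (τ : D.G ⟶ E.G) : Prop :=
  (∀ x y : T, (D.φ₂ x y).hom ≫ τ.app (x ⊗ y) = (τ.app x ⊗ₘ τ.app y) ≫ (E.φ₂ x y).hom) ∧
    (D.φ₀.hom ≫ τ.app (𝟙_ T) = E.φ₀.hom) ∧
    ∀ v : V, (D.γ v).hom ≫ τ.app (C.obj v) = (E.γ v).hom

/-- `D` is an equivalence of pairs. -/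
def PairHomData.IsEquiv {C : CentralData V T} {C' : CentralData V T'}
    (D : PairHomData C C') : Prop :=
  ∃ E : PairHomData C' C, E.IsPairHom ∧
    ∃ (η : (PairHomData.id C).G ≅ (PairHomData.comp D E).G)
      (ε : (PairHomData.comp E D).G ≅ (PairHomData.id C').G),
      IsPair2Mor (PairHomData.id C) (PairHomData.comp D E) η.hom ∧
        IsPair2Mor (PairHomData.comp E D) (PairHomData.id C') ε.hom

end Central

end ModMonPaper
/-! ### The 2-functor `Ψ` and the pair associated to a module monoidal category -/

namespace ModMonPaper

section Psi

variable {V : Type u₁} [Category.{v₁} V] [MonoidalCategory V] [BraidedCategory V]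
variable {T : Type u₂} [Category.{v₂} T] [MonoidalCategory T]
variable {T' : Type u₃} [Category.{v₃} T'] [MonoidalCategory T']

/-- `Ψ` on objects: the unital module monoidal structure induced by a pair. -/
def PsiData (C : CentralData V T) : ModMonData V T where
  act v x := C.obj v ⊗ x
  actMap f g := C.map f ⊗ₘ g
  massoc v w x := tensorIso (C.φ₂ v w).symm (Iso.refl x) ≪≫ α_ (C.obj v) (C.obj w) x
  munit x := tensorIso C.φ₀.symm (Iso.refl x) ≪≫ λ_ x
  α₁ v x y := α_ (C.obj v) x y
  α₂ v x y := (α_ x (C.obj v) y).symm ≪≫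
    tensorIso (C.halfBraiding v x).symm (Iso.refl y) ≪≫ α_ (C.obj v) x y

theorem psiData_actMap_id (C : CentralData V T) (hC : C.IsCentral) (v : V) (x : T) :
    (PsiData C).actMap (𝟙 v) (𝟙 x) = 𝟙 ((PsiData C).act v x) := by
  show C.map (𝟙 v) ⊗ₘ 𝟙 x = 𝟙 (C.obj v ⊗ x)
  rw [hC.map_id]; simp

theorem psiData_actMap_comp (C : CentralData V T) (hC : C.IsCentral)
    {v w u : V} {x y z : T} (f : v ⟶ w) (g : w ⟶ u) (h : x ⟶ y) (k : y ⟶ z) :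
    (PsiData C).actMap (f ≫ g) (h ≫ k) =
      (PsiData C).actMap f h ≫ (PsiData C).actMap g k := by
  show C.map (f ≫ g) ⊗ₘ (h ≫ k) = (C.map f ⊗ₘ h) ≫ (C.map g ⊗ₘ k)
  rw [hC.map_comp]; simp

/-- `Ψ` on 1-morphisms: the unital module monoidal functor induced by a morphism
of pairs. -/
def PsiHom {C : CentralData V T} {C' : CentralData V T'} (D : PairHomData C C') :
    UMMFunctorData (PsiData C) (PsiData C') where
  F := D.G
  φ₂ := D.φ₂
  φ₀ := D.φ₀
  s v x := tensorIso (D.γ v) (Iso.refl (D.G.obj x)) ≪≫ D.φ₂ (C.obj v) x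

variable {M : Type u₂} [Category.{v₂} M] [MonoidalCategory M]

/-- The pair associated to a unital module monoidal category:
`F v := v ▷ 𝟙`, with the half-braiding, `φ₂` and `φ₀` of the paper. -/
def pairOfModMon (P : ModMonData V M)
    (hid : ∀ (v : V) (x : M), P.actMap (𝟙 v) (𝟙 x) = 𝟙 (P.act v x))
    (hcomp : ∀ {v w u : V} {x y z : M} (f : v ⟶ w) (g : w ⟶ u) (h : x ⟶ y) (k : y ⟶ z),
      P.actMap (f ≫ g) (h ≫ k) = P.actMap f h ≫ P.actMap g k) :
    CentralData V M where
  obj v := P.act v (𝟙_ M)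
  map f := P.actMap f (𝟙 (𝟙_ M))
  halfBraiding v t := P.α₁ v (𝟙_ M) t ≪≫
    P.toModuleData.actIso hid hcomp v (λ_ t ≪≫ (ρ_ t).symm) ≪≫ (P.α₂ v t (𝟙_ M)).symm
  φ₂ v w := P.α₁ v (𝟙_ M) (P.act w (𝟙_ M)) ≪≫
    P.toModuleData.actIso hid hcomp v (P.α₂ w (𝟙_ M) (𝟙_ M)) ≪≫
      (P.massoc v w (𝟙_ M ⊗ 𝟙_ M)).symm ≪≫
        P.toModuleData.actIso hid hcomp (v ⊗ w) (ρ_ (𝟙_ M))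
  φ₀ := (P.munit (𝟙_ M)).symm

end Psi

end ModMonPaper

namespace CategoryTheory

variable {C : Type*} [Category C] [MonoidalCategory C]

theorem HalfBraiding.β_tensorUnit_hom {X : C} (b : HalfBraiding X) :
    (b.β (𝟙_ C)).hom = (ρ_ X).hom ≫ (λ_ X).inv := by
  -- Naturality along `λ_ 𝟙` and the hexagon at `(𝟙, 𝟙)` express `β 𝟙 ▷ 𝟙` through `β 𝟙` and
  -- its inverse; these cancel, and whiskering with `𝟙` is faithful.
  have hβ : (b.β (𝟙_ C ⊗ 𝟙_ C)).hom =
      (X ◁ (λ_ (𝟙_ C)).hom) ≫ (b.β (𝟙_ C)).hom ≫ ((λ_ (𝟙_ C)).inv ▷ X) := by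
    rw [b.naturality_assoc]; simp
  have hb : (b.β (𝟙_ C)).hom ▷ 𝟙_ C = (α_ _ _ _).hom ≫ (X ◁ (λ_ (𝟙_ C)).hom) ≫
      (b.β (𝟙_ C)).hom ≫ ((λ_ (𝟙_ C)).inv ▷ X) ≫ (α_ _ _ _).hom ≫
      (𝟙_ C ◁ (b.β (𝟙_ C)).inv) ≫ (α_ _ _ _).inv := by
    rw [← reassoc_of% hβ, b.monoidal]; simp
  have hcancel : ((λ_ (𝟙_ C)).inv ▷ X) ≫ (α_ _ _ _).hom ≫ (𝟙_ C ◁ (b.β (𝟙_ C)).inv) ≫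
      (α_ _ _ _).inv ≫ ((λ_ X).hom ▷ 𝟙_ C) = (b.β (𝟙_ C)).inv := by
    monoidal
  have hwhisker : ((b.β (𝟙_ C)).hom ≫ (λ_ X).hom) ▷ 𝟙_ C = (ρ_ X).hom ▷ 𝟙_ C := by
    rw [comp_whiskerRight, hb]
    simp only [assoc, hcancel, Iso.hom_inv_id, comp_id]
    monoidal
  rw [← cancel_mono (λ_ X).hom, assoc, Iso.inv_hom_id, comp_id]
  exact (whiskerRight_iff _ _).mp hwhisker

theorem HalfBraiding.β_tensorUnit_inv {X : C} (b : HalfBraiding X) :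
    (b.β (𝟙_ C)).inv = (λ_ X).hom ≫ (ρ_ X).inv := by
  rw [← cancel_epi (b.β (𝟙_ C)).hom, Iso.hom_inv_id, b.β_tensorUnit_hom]
  simp

end CategoryTheory

namespace ModMonPaper

section Pairs

variable {V : Type u₁} [Category.{v₁} V] [MonoidalCategory V]
variable {T : Type u₂} [Category.{v₂} T] [MonoidalCategory T]

section Central

variable [BraidedCategory V]

def CentralData.IsCentral.toHalfBraiding {C : CentralData V T} (hC : C.IsCentral) (v : V) :
    HalfBraiding (C.obj v) where
  β := C.halfBraiding v
  monoidal x y := by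
    have hex := hC.halfBraiding_hex v x y
    simp only [tensorHom_id, id_tensorHom] at hex
    rw [← cancel_epi (α_ _ _ _).hom, ← cancel_mono (α_ _ _ _).hom, assoc, hex]
    simp
  naturality f := by simpa using hC.halfBraiding_natural v f

theorem CentralData.IsCentral.halfBraiding_tensorUnit_inv {C : CentralData V T}
    (hC : C.IsCentral) (v : V) :
    (C.halfBraiding v (𝟙_ T)).inv = (λ_ (C.obj v)).hom ≫ (ρ_ (C.obj v)).inv :=
  (hC.toHalfBraiding v).β_tensorUnit_inv

end Central

section IdentityMorphism

variable {C C' : CentralData V T}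

def PairHomData.idWith (γ : ∀ v : V, C'.obj v ≅ C.obj v) : PairHomData C C' where
  G := 𝟭 T
  φ₂ x y := Iso.refl (x ⊗ y)
  φ₀ := Iso.refl (𝟙_ T)
  γ := γ

theorem PairHomData.idWith_isPairHom (γ : ∀ v : V, C'.obj v ≅ C.obj v)
    (natural : ∀ {v w : V} (f : v ⟶ w), C'.map f ≫ (γ w).hom = (γ v).hom ≫ C.map f)
    (tensor : ∀ v w : V, (C'.φ₂ v w).hom ≫ (γ (v ⊗ w)).hom =
      ((γ v).hom ⊗ₘ (γ w).hom) ≫ (C.φ₂ v w).hom)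
    (unit : C'.φ₀.hom ≫ (γ (𝟙_ V)).hom = C.φ₀.hom)
    (braiding : ∀ (v : V) (t : T), ((γ v).hom ⊗ₘ 𝟙 t) ≫ (C.halfBraiding v t).hom =
      (C'.halfBraiding v t).hom ≫ (𝟙 t ⊗ₘ (γ v).hom)) :
    (idWith γ).IsPairHom where
  φ₂_natural f g := by simp [idWith]
  hexagon x y z := by simp [idWith]
  φ₀_left x := by simp [idWith]
  φ₀_right x := by simp [idWith]
  γ_natural f := natural f
  γ_tensor v w := by simpa [idWith] using tensor v w
  γ_unit := by simpa [idWith] using unit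
  γ_braiding v t := by simpa [idWith] using braiding v t

theorem PairHomData.IsPairHom.idWith_symm {γ : ∀ v : V, C'.obj v ≅ C.obj v}
    (h : (idWith γ).IsPairHom) : (idWith fun v => (γ v).symm).IsPairHom := by
  refine idWith_isPairHom _ (fun f => ?_) (fun v w => ?_) ?_ (fun v t => ?_)
  · have hf : C'.map f ≫ (γ _).hom = (γ _).hom ≫ C.map f := by
      simpa [idWith] using h.γ_natural f
    simp [Iso.comp_inv_eq, hf]
  · have ht : (C'.φ₂ v w).hom ≫ (γ (v ⊗ w)).hom =
        ((γ v).hom ⊗ₘ (γ w).hom) ≫ (C.φ₂ v w).hom := by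
      simpa [idWith] using h.γ_tensor v w
    simp [Iso.comp_inv_eq, ht]
  · have hu : C'.φ₀.hom ≫ (γ (𝟙_ V)).hom = C.φ₀.hom := by simpa [idWith] using h.γ_unit
    simp [Iso.comp_inv_eq, hu]
  · have hb : ((γ v).hom ▷ t) ≫ (C.halfBraiding v t).hom =
        (C'.halfBraiding v t).hom ≫ (t ◁ (γ v).hom) := by
      simpa [idWith] using h.γ_braiding v t
    rw [← cancel_epi ((γ v).hom ⊗ₘ 𝟙 t), ← cancel_mono (𝟙 t ⊗ₘ (γ v).hom)]
    simp [reassoc_of% hb]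

theorem PairHomData.IsPairHom.idWith_isEquiv {γ : ∀ v : V, C'.obj v ≅ C.obj v}
    (h : (idWith γ).IsPairHom) : (idWith γ).IsEquiv := by
  refine ⟨idWith fun v => (γ v).symm, h.idWith_symm, Iso.refl _, Iso.refl _,
    ⟨?_, ?_, ?_⟩, ⟨?_, ?_, ?_⟩⟩ <;> intros <;> simp [idWith, PairHomData.id, PairHomData.comp]

end IdentityMorphism

section PsiPair

variable [BraidedCategory V] (C : CentralData V T) (hC : C.IsCentral)

abbrev psiPair : CentralData V T :=
  pairOfModMon (PsiData C) (psiData_actMap_id C hC)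
    (fun f g h k => psiData_actMap_comp C hC f g h k)

theorem psiPair_map_comp_rightUnitor {v w : V} (f : v ⟶ w) :
    (psiPair C hC).map f ≫ (ρ_ (C.obj w)).hom = (ρ_ (C.obj v)).hom ≫ C.map f := by
  dsimp only [psiPair, pairOfModMon, PsiData]
  simp

theorem psiPair_φ₂_comp_rightUnitor (v w : V) :
    ((psiPair C hC).φ₂ v w).hom ≫ (ρ_ (C.obj (v ⊗ w))).hom =
      ((ρ_ (C.obj v)).hom ⊗ₘ (ρ_ (C.obj w)).hom) ≫ (C.φ₂ v w).hom := by
  dsimp only [psiPair, pairOfModMon, PsiData]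
  simp only [ModuleData.actIso, Iso.trans_hom, Iso.symm_hom,
    tensorIso_hom, Iso.trans_inv, Iso.symm_inv, tensorIso_inv, Iso.refl_hom, Iso.refl_inv,
    hC.map_id, hC.halfBraiding_tensorUnit_inv, id_tensorHom, tensorHom_id, assoc]
  monoidal

theorem psiPair_φ₀_comp_rightUnitor :
    (psiPair C hC).φ₀.hom ≫ (ρ_ (C.obj (𝟙_ V))).hom = C.φ₀.hom := by
  dsimp only [psiPair, pairOfModMon, PsiData]
  simp only [Iso.symm_hom, Iso.trans_inv, Iso.symm_inv, tensorIso_inv, Iso.refl_inv,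
    tensorHom_id, assoc]
  monoidal

theorem psiPair_halfBraiding_rightUnitor (v : V) (t : T) :
    ((ρ_ (C.obj v)).hom ⊗ₘ 𝟙 t) ≫ (C.halfBraiding v t).hom =
      ((psiPair C hC).halfBraiding v t).hom ≫ (𝟙 t ⊗ₘ (ρ_ (C.obj v)).hom) := by
  dsimp only [psiPair, pairOfModMon, PsiData]
  simp only [ModuleData.actIso, Iso.trans_hom, Iso.symm_hom, Iso.trans_inv, Iso.symm_inv,
    tensorIso_inv, Iso.refl_inv, hC.map_id, id_tensorHom, tensorHom_id, assoc]
  monoidal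

end PsiPair

end Pairs

variable {V : Type u₁} [Category.{v₁} V] [MonoidalCategory V] [BraidedCategory V]
variable {T : Type u₂} [Category.{v₂} T] [MonoidalCategory T]

/-- Let `(T, F)` be a pair, `M := Ψ(T, F)` and `(T, F')` the pair
associated to `M`. Then the identity functor with `φ₂ = id`, `φ₀ = id` and action
coherence `γ_v := ρ_{F v}` is a morphism of pairs `(T, F) ⟶ (T, F')`, and it is an
equivalence of pairs whose underlying functor is the identity. -/
theorem pairOfModMon_psi_id_equivalence (C : CentralData V T) (hC : C.IsCentral) :
    let C' : CentralData V T := pairOfModMon (PsiData C) (psiData_actMap_id C hC)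
      (fun f g h k => psiData_actMap_comp C hC f g h k);
    let D : PairHomData C C' :=
      { G := 𝟭 T
        φ₂ := fun x y => Iso.refl (x ⊗ y)
        φ₀ := Iso.refl (𝟙_ T)
        γ := fun v => ρ_ (C.obj v) };
    D.IsPairHom ∧ D.G = 𝟭 T ∧ D.IsEquiv := by
  intro C' D
  have hD : D.IsPairHom := PairHomData.idWith_isPairHom _
    (psiPair_map_comp_rightUnitor C hC) (psiPair_φ₂_comp_rightUnitor C hC)
    (psiPair_φ₀_comp_rightUnitor C hC) (psiPair_halfBraiding_rightUnitor C hC)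
  exact ⟨hD, rfl, hD.idWith_isEquiv⟩

end ModMonPaper
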